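/- Let H be a bialgebra over a field K and C a left H-module coalgebra. If E is a finite-dimensional subcoalgebra of C, then D = H·E (the left H-submodule generated by E) is simultaneously an H-submodule and a subcoalgebra of C, and D is finitely generated as a left H-module. Consequently, every finite subset of C is contained in an H-submodule subcoalgebra of C that is finitely generated as a left H-module. -/

import Mathlib

/-!
For `c ∈ C` let `D` be the span of all `ψ ⇀ c ↼ φ = Σ φ(c₁) c₂ ψ(c₃)`. It contains `c`
(take `φ = ψ = ε`) and is finite-dimensional, since these elements are middle-leg contractions of
the finite tensor `Δ²c`. Coassociativity gives `Δ(ψ ⇀ c ↼ φ) = Σ (c₁ ↼ φ) ⊗ (ψ ⇀ c₂)`; expanding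
`Δc` in a basis on either side puts this in `C ⊗ D` and in `D ⊗ C`, whose intersection over a
field is `D ⊗ D`. So `D` is a subcoalgebra, and finitely many of them cover a finite set.
The axiom `Δ(h·c) = Σ h₁c₁ ⊗ h₂c₂` makes `H·E` a subcoalgebra whenever `E` is one, and a finite
`K`-basis of `E` generates `H·E` over `H`.
-/

open TensorProduct LinearMap

/-- `D` is a subcoalgebra of the `K`-coalgebra `C`. -/
def IsSubcoalgebra {K C : Type*} [CommSemiring K] [AddCommMonoid C] [Module K C]
    [Coalgebra K C] (D : Submodule K C) : Prop :=
  ∀ x ∈ D, Coalgebra.comul (R := K) x ∈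
    LinearMap.range (TensorProduct.map D.subtype D.subtype)

/-- The `H`-action on `C` as a `K`-linear map `H ⊗ C → C`. -/
noncomputable def actionMap (K H C : Type*) [CommSemiring K] [Semiring H] [Algebra K H]
    [AddCommMonoid C] [Module K C] [Module H C] [IsScalarTower K H C] [SMulCommClass K H C] :
    H ⊗[K] C →ₗ[K] C :=
  TensorProduct.lift (LinearMap.mk₂ K (· • ·) (fun h h' c => add_smul h h' c)
    (fun k h c => smul_assoc k h c) (fun h c c' => smul_add h c c')
    (fun k h c => (smul_comm k h c).symm))

namespace TensorProduct

section CommSemiring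

variable {R M N P : Type*} [CommSemiring R] [AddCommMonoid M] [Module R M] [AddCommMonoid N]
  [Module R N] [AddCommMonoid P] [Module R P]

theorem exists_finite_submodule_left_of_fg {T : Submodule R (M ⊗[R] N)} (hT : T.FG) :
    ∃ M' : Submodule R M, Module.Finite R M' ∧ T ≤ range (M'.subtype.rTensor N) := by
  obtain ⟨s, rfl⟩ := hT
  obtain ⟨M', hM', hs⟩ :=
    exists_finite_submodule_left_of_setFinite (s : Set (M ⊗[R] N)) s.finite_toSet
  exact ⟨M', hM', Submodule.span_le.mpr hs⟩

noncomputable def lcontract (φ : M →ₗ[R] R) : M ⊗[R] N →ₗ[R] N :=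
  (TensorProduct.lid R N).toLinearMap ∘ₗ φ.rTensor N

noncomputable def rcontract (ψ : N →ₗ[R] R) : M ⊗[R] N →ₗ[R] M :=
  (TensorProduct.rid R M).toLinearMap ∘ₗ ψ.lTensor M

@[simp] theorem lcontract_tmul (φ : M →ₗ[R] R) (m : M) (n : N) :
    lcontract φ (m ⊗ₜ n) = φ m • n := rfl

@[simp] theorem rcontract_tmul (ψ : N →ₗ[R] R) (m : M) (n : N) :
    rcontract ψ (m ⊗ₜ n) = ψ n • m := rfl

theorem lcontract_lTensor (φ : M →ₗ[R] R) (g : N →ₗ[R] P) (t : M ⊗[R] N) :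
    lcontract φ (g.lTensor M t) = g (lcontract φ t) := by
  induction t <;> simp_all

theorem lcontract_rTensor (φ : P →ₗ[R] R) (f : M →ₗ[R] P) (t : M ⊗[R] N) :
    lcontract φ (f.rTensor N t) = lcontract (φ ∘ₗ f) t := by
  induction t <;> simp_all

theorem rcontract_rTensor (ψ : N →ₗ[R] R) (f : M →ₗ[R] P) (t : M ⊗[R] N) :
    rcontract ψ (f.rTensor N t) = f (rcontract ψ t) := by
  induction t <;> simp_all

theorem rcontract_lTensor (ψ : P →ₗ[R] R) (g : N →ₗ[R] P) (t : M ⊗[R] N) :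
    rcontract ψ (g.lTensor M t) = rcontract (ψ ∘ₗ g) t := by
  induction t <;> simp_all

theorem lcontract_assoc (φ : M →ₗ[R] R) (t : (M ⊗[R] N) ⊗[R] P) :
    lcontract φ (TensorProduct.assoc R M N P t) = (lcontract φ).rTensor P t := by
  induction t with
  | zero => simp
  | tmul mn p => induction mn <;> simp_all [add_tmul, smul_tmul']
  | add t₁ t₂ ih₁ ih₂ => simp_all

theorem rcontract_assoc_symm (ψ : P →ₗ[R] R) (t : M ⊗[R] (N ⊗[R] P)) :
    rcontract ψ ((TensorProduct.assoc R M N P).symm t) = (rcontract ψ).lTensor M t := by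
  induction t with
  | zero => simp
  | tmul m np => induction np <;> simp_all [tmul_add, tmul_smul]
  | add t₁ t₂ ih₁ ih₂ => simp_all

end CommSemiring

section Field

variable {K M N : Type*} [Field K] [AddCommGroup M] [Module K M] [AddCommGroup N] [Module K N]

theorem mem_range_lTensor_subtype_iff {Q : Submodule K N} {t : M ⊗[K] N} :
    t ∈ range (Q.subtype.lTensor M) ↔ ∀ φ : M →ₗ[K] K, lcontract φ t ∈ Q := by
  classical
  refine ⟨fun ⟨u, hu⟩ φ => hu ▸ lcontract_lTensor φ Q.subtype u ▸ Submodule.coe_mem _, fun h => ?_⟩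
  let b := Module.Free.chooseBasis K M
  rw [← (equivFinsuppOfBasisLeft b).symm_apply_apply t, equivFinsuppOfBasisLeft_symm_apply]
  refine Submodule.finsuppSum_mem K _ _ _ fun i _ =>
    ⟨b i ⊗ₜ ⟨equivFinsuppOfBasisLeft b t i, equivFinsuppOfBasisLeft_apply b t i ▸ h _⟩, rfl⟩

theorem mem_range_rTensor_subtype_iff {P : Submodule K M} {t : M ⊗[K] N} :
    t ∈ range (P.subtype.rTensor N) ↔ ∀ ψ : N →ₗ[K] K, rcontract ψ t ∈ P := by
  classical
  refine ⟨fun ⟨u, hu⟩ ψ => hu ▸ rcontract_rTensor ψ P.subtype u ▸ Submodule.coe_mem _, fun h => ?_⟩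
  let b := Module.Free.chooseBasis K N
  rw [← (equivFinsuppOfBasisRight b).symm_apply_apply t, equivFinsuppOfBasisRight_symm_apply]
  refine Submodule.finsuppSum_mem K _ _ _ fun i _ =>
    ⟨⟨equivFinsuppOfBasisRight b t i, equivFinsuppOfBasisRight_apply b t i ▸ h _⟩ ⊗ₜ b i, rfl⟩

theorem range_lTensor_inf_range_rTensor_le (P : Submodule K M) (Q : Submodule K N) :
    range (Q.subtype.lTensor M) ⊓ range (P.subtype.rTensor N) ≤ range (mapIncl P Q) := by
  rintro t ⟨⟨u, rfl⟩, ⟨v, hv⟩⟩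
  obtain ⟨π, hπ⟩ := Q.subtype.exists_leftInverse_of_injective Q.ker_subtype
  have hmap : mapIncl P Q ∘ₗ π.lTensor P = (Q.subtype ∘ₗ π).lTensor M ∘ₗ P.subtype.rTensor N := by
    ext; simp
  refine ⟨π.lTensor P v, ?_⟩
  rw [← comp_apply, hmap, comp_apply, hv, ← lTensor_comp_apply, comp_assoc, hπ, comp_id]

end Field

end TensorProduct

namespace Coalgebra

section CommSemiring

variable {R C : Type*} [CommSemiring R] [AddCommMonoid C] [Module R C] [Coalgebra R C]

theorem isSubcoalgebra_iff_le_comap {D : Submodule R C} :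
    IsSubcoalgebra D ↔ D ≤ (range (mapIncl D D)).comap comul :=
  Iff.rfl

theorem isSubcoalgebra_iSup {ι : Sort*} {D : ι → Submodule R C}
    (hD : ∀ i, IsSubcoalgebra (D i)) : IsSubcoalgebra (⨆ i, D i) :=
  isSubcoalgebra_iff_le_comap.mpr <| iSup_le fun i =>
    (isSubcoalgebra_iff_le_comap.mp (hD i)).trans <|
      Submodule.comap_mono (range_mapIncl_mono (le_iSup D i) (le_iSup D i))

/-- `rightHit φ c = c ↼ φ = Σ φ(c₁) c₂` and `leftHit ψ c = ψ ⇀ c = Σ c₁ ψ(c₂)`, the hit actions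
of the dual algebra on `C`. -/
noncomputable def rightHit (φ : C →ₗ[R] R) : C →ₗ[R] C :=
  lcontract φ ∘ₗ comul

noncomputable def leftHit (ψ : C →ₗ[R] R) : C →ₗ[R] C :=
  rcontract ψ ∘ₗ comul

theorem comul_rightHit (φ : C →ₗ[R] R) (c : C) :
    comul (rightHit φ c) = (rightHit φ).rTensor C (comul c) := by
  rw [rightHit, comp_apply, ← lcontract_lTensor, ← coassoc_apply, lcontract_assoc,
    ← rTensor_comp_apply]

theorem comul_leftHit (ψ : C →ₗ[R] R) (c : C) :
    comul (leftHit ψ c) = (leftHit ψ).lTensor C (comul c) := by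
  rw [leftHit, comp_apply, ← rcontract_rTensor, ← coassoc_symm_apply, rcontract_assoc_symm,
    ← lTensor_comp_apply]

theorem rightHit_leftHit (φ ψ : C →ₗ[R] R) (c : C) :
    rightHit φ (leftHit ψ c) = leftHit ψ (rightHit φ c) := by
  rw [rightHit, comp_apply, comul_leftHit, lcontract_lTensor]
  rfl

@[simp] theorem rightHit_counit (c : C) : rightHit (counit (R := R)) c = c := by
  simp [rightHit, lcontract]

@[simp] theorem leftHit_counit (c : C) : leftHit (counit (R := R)) c = c := by
  simp [leftHit, rcontract]

variable (R) in
def coeffSpace (c : C) : Submodule R C :=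
  Submodule.span R
    (Set.range fun φψ : (C →ₗ[R] R) × (C →ₗ[R] R) => leftHit φψ.2 (rightHit φψ.1 c))

theorem mem_coeffSpace_self (c : C) : c ∈ coeffSpace R c :=
  Submodule.subset_span ⟨(counit, counit), by simp⟩

end CommSemiring

section Field

variable {K C : Type*} [Field K] [AddCommGroup C] [Module K C] [Coalgebra K C]

theorem isSubcoalgebra_coeffSpace (c : C) : IsSubcoalgebra (coeffSpace K c) := by
  refine isSubcoalgebra_iff_le_comap.mpr <| Submodule.span_le.mpr ?_
  rintro _ ⟨⟨φ, ψ⟩, rfl⟩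
  have hcomul : comul (leftHit ψ (rightHit φ c)) =
      (leftHit ψ).lTensor C ((rightHit φ).rTensor C (comul c)) := by
    rw [comul_leftHit, comul_rightHit]
  refine range_lTensor_inf_range_rTensor_le _ _ ⟨?_, ?_⟩ <;> rw [SetLike.mem_coe, hcomul]
  · refine mem_range_lTensor_subtype_iff.mpr fun φ' => ?_
    rw [lcontract_lTensor, lcontract_rTensor]
    exact Submodule.subset_span ⟨(φ' ∘ₗ rightHit φ, ψ), rfl⟩
  · refine mem_range_rTensor_subtype_iff.mpr fun ψ' => ?_
    rw [rcontract_lTensor, rcontract_rTensor]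
    exact rightHit_leftHit φ (ψ' ∘ₗ leftHit ψ) c ▸
      Submodule.subset_span ⟨(φ, ψ' ∘ₗ leftHit ψ), rfl⟩

instance finiteDimensional_coeffSpace (c : C) : FiniteDimensional K (coeffSpace K c) := by
  obtain ⟨W, hWfin, hW⟩ :=
    exists_finite_submodule_right_of_setFinite {comul (R := K) c} (Set.finite_singleton _)
  obtain ⟨V, hVfin, hV⟩ :=
    exists_finite_submodule_left_of_fg ((Module.Finite.iff_fg.mp hWfin).map comul)
  refine Submodule.finiteDimensional_of_le (S₂ := V) (Submodule.span_le.mpr ?_)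
  rintro _ ⟨⟨φ, ψ⟩, rfl⟩
  have hφ : rightHit φ c ∈ W := mem_range_lTensor_subtype_iff.mp (hW rfl) φ
  exact mem_range_rTensor_subtype_iff.mp (hV ⟨_, hφ, rfl⟩) ψ

theorem exists_finiteDimensional_isSubcoalgebra_of_finite {F : Set C} (hF : F.Finite) :
    ∃ E : Submodule K C, F ⊆ E ∧ IsSubcoalgebra E ∧ FiniteDimensional K E := by
  have := hF.to_subtype
  refine ⟨⨆ x : F, coeffSpace K (x : C), fun x hx => ?_,
    isSubcoalgebra_iSup fun x => isSubcoalgebra_coeffSpace (x : C), inferInstance⟩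
  exact Submodule.mem_iSup_of_mem (⟨x, hx⟩ : F) (mem_coeffSpace_self x)

end Field

end Coalgebra

section ModuleCoalgebra

variable {K H C : Type*} [CommSemiring K] [Semiring H] [Bialgebra K H] [AddCommMonoid C]
  [Module K C] [Coalgebra K C] [Module H C] [IsScalarTower K H C] [SMulCommClass K H C]

theorem comul_smul_mem_range_mapIncl
    (hcompat : ∀ (h : H) (c : C),
        Coalgebra.comul (R := K) (h • c) =
        (TensorProduct.map (actionMap K H C) (actionMap K H C))
          ((TensorProduct.tensorTensorTensorComm K H H C C)
            ((Coalgebra.comul (R := K) h) ⊗ₜ[K] (Coalgebra.comul (R := K) c))))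
    (D : Submodule H C) (h : H) {c : C}
    (hc : Coalgebra.comul c ∈ range (mapIncl (D.restrictScalars K) (D.restrictScalars K))) :
    Coalgebra.comul (h • c) ∈ range (mapIncl (D.restrictScalars K) (D.restrictScalars K)) := by
  obtain ⟨t, ht⟩ := hc
  rw [hcompat, ← ht]
  clear ht
  induction Coalgebra.comul (R := K) h using TensorProduct.induction_on with
  | zero => simp
  | add s₁ s₂ ih₁ ih₂ => rw [add_tmul, map_add, map_add]; exact add_mem ih₁ ih₂
  | tmul h₁ h₂ =>
    induction t using TensorProduct.induction_on with
    | zero => simp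
    | add t₁ t₂ ih₁ ih₂ => rw [map_add, tmul_add, map_add, map_add]; exact add_mem ih₁ ih₂
    | tmul d d' =>
      exact ⟨⟨h₁ • (d : C), D.smul_mem h₁ d.2⟩ ⊗ₜ ⟨h₂ • (d' : C), D.smul_mem h₂ d'.2⟩, rfl⟩

theorem isSubcoalgebra_span
    (hcompat : ∀ (h : H) (c : C),
        Coalgebra.comul (R := K) (h • c) =
        (TensorProduct.map (actionMap K H C) (actionMap K H C))
          ((TensorProduct.tensorTensorTensorComm K H H C C)
            ((Coalgebra.comul (R := K) h) ⊗ₜ[K] (Coalgebra.comul (R := K) c))))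
    {E : Submodule K C} (hE : IsSubcoalgebra E) :
    IsSubcoalgebra ((Submodule.span H (E : Set C)).restrictScalars K) := by
  have hle : E ≤ (Submodule.span H (E : Set C)).restrictScalars K :=
    fun _ hy => Submodule.subset_span hy
  intro x hx
  replace hx : x ∈ Submodule.span H (E : Set C) := hx
  induction hx using Submodule.span_induction with
  | mem x hx => exact range_mapIncl_mono hle hle (hE x hx)
  | zero => simp
  | add x y _ _ hx hy => rw [map_add]; exact add_mem hx hy
  | smul h x _ hx => exact comul_smul_mem_range_mapIncl hcompat _ h hx

end ModuleCoalgebra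

theorem module_coalgebra_finiteness
    (K : Type*) [Field K] (H : Type*) [Ring H] [Bialgebra K H]
    (C : Type*) [AddCommGroup C] [Module K C] [Coalgebra K C]
    [Module H C] [IsScalarTower K H C] [SMulCommClass K H C]
    -- module-coalgebra axiom: Δ_C(h·c) = Σ (h₁·c₍₁₎) ⊗ (h₂·c₍₂₎)
    (hcompat : ∀ (h : H) (c : C),
        Coalgebra.comul (R := K) (h • c) =
        (TensorProduct.map (actionMap K H C) (actionMap K H C))
          ((TensorProduct.tensorTensorTensorComm K H H C C)
            ((Coalgebra.comul (R := K) h) ⊗ₜ[K] (Coalgebra.comul (R := K) c)))) :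
    (∀ E : Submodule K C, IsSubcoalgebra E → FiniteDimensional K E →
      IsSubcoalgebra ((Submodule.span H (E : Set C)).restrictScalars K) ∧
      (Submodule.span H (E : Set C)).FG) ∧
    (∀ F : Set C, F.Finite → ∃ D : Submodule H C, F ⊆ D ∧
      IsSubcoalgebra (D.restrictScalars K) ∧ D.FG) := by
  have hspan (E : Submodule K C) (hE : IsSubcoalgebra E) (hfin : FiniteDimensional K E) :
      IsSubcoalgebra ((Submodule.span H (E : Set C)).restrictScalars K) ∧
        (Submodule.span H (E : Set C)).FG :=
    ⟨isSubcoalgebra_span hcompat hE, (Module.Finite.iff_fg.mp hfin).span⟩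
  refine ⟨hspan, fun F hF => ?_⟩
  obtain ⟨E, hFE, hE, hfin⟩ :=
    Coalgebra.exists_finiteDimensional_isSubcoalgebra_of_finite (K := K) hF
  exact ⟨Submodule.span H E, hFE.trans Submodule.subset_span, hspan E hE hfin⟩
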